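/- arXiv:1105.1569 — 2 statements merged into one kernel-verified Lean document; each statement's English description precedes it below -/
import Mathlib

section
/- Let B be a bipartite graph with maximum matching size κ, and let M be a matching such that the shortest augmenting path with respect to M has length greater than 2L. Then |M| ≥ κ − κ/L. -/
/-!
The mates of the matchings `M` and `N` are involutions `f` and `g` of the vertex set. For a vertex
`u` left free by `M`, they act on the orbit `(f * g) ^ k u` (`k : ℤ` taken modulo the period `p`)
as the reflections `k ↦ -k` and `k ↦ -1 - k`. Reading the orbit in the order `0, -1, 1, -2, 2, …`
therefore alternately follows an edge of `N` and an edge of `M`, visits each of the `p` points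
once, and ends at a vertex left free by `N` (`p` odd) or by `M` (`p` even: an `M`-augmenting path
of length `p - 1`).

Of the vertices covered by `N` but not by `M`, those with odd `p` are sent injectively to the
vertices covered by `M` but not by `N`, so at least `2 (|N| - |M|)` of them start augmenting
paths. Each of these paths is longer than `2L`, so its first `2L + 1` edges contain `L` edges of
`M`, and an edge of `M` lies on the paths from at most two starting points, the two ends of one
path. Hence `2 (|N| - |M|) L ≤ 2 |M|`; take `|N| = κ`.
-/

/-- An augmenting path with respect to a matching `M`. -/
def SimpleGraph.Subgraph.IsAugPath {V : Type*} {G : SimpleGraph V} (M : G.Subgraph)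
    {u v : V} (p : G.Walk u v) : Prop :=
  p.IsPath ∧ u ∉ M.support ∧ v ∉ M.support ∧ Odd p.length ∧
    List.Chain' (fun a b => (a ∈ M.edgeSet) ≠ (b ∈ M.edgeSet)) p.edges

namespace Equiv.Perm

variable {α : Type*} {f g : Perm α} {u v : α}

theorem zpow_apply_eq_zpow_apply_iff (h : Perm α) (u : α) (a b : ℤ) :
    (h ^ a) u = (h ^ b) u ↔ (MulAction.period h u : ℤ) ∣ a - b := by
  rw [← MulAction.zpow_smul_eq_iff_period_dvd, Perm.smul_def, sub_eq_neg_add, zpow_add,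
    mul_apply, zpow_neg, Perm.inv_eq_iff_eq]

/-- The exponents `0, -1, 1, -2, 2, …`: when `f u = u`, `zigzag f g u` runs through
`u, g u, f (g u), g (f (g u)), …` (`zigzag_succ_of_even`, `zigzag_succ_of_odd`). -/
def zigzagExp (n : ℕ) : ℤ := if n % 2 = 0 then ((n / 2 : ℕ) : ℤ) else -((n / 2 : ℕ) + 1 : ℤ)

variable (f g u) in
def zigzag (n : ℕ) : α := ((f * g) ^ zigzagExp n) u

@[simp] theorem zigzag_zero : zigzag f g u 0 = u := by
  simp [zigzag, zigzagExp]

theorem sameCycle_zigzag (n : ℕ) : SameCycle (f * g) u (zigzag f g u n) := ⟨_, rfl⟩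

theorem zigzag_eq_zigzag_iff {a b : ℕ} :
    zigzag f g u a = zigzag f g u b ↔
      (MulAction.period (f * g) u : ℤ) ∣ zigzagExp a - zigzagExp b :=
  zpow_apply_eq_zpow_apply_iff _ _ _ _

theorem zigzag_injOn {a b : ℕ} (ha : a < MulAction.period (f * g) u)
    (hb : b < MulAction.period (f * g) u) (h : zigzag f g u a = zigzag f g u b) : a = b := by
  -- the exponents of `0, …, p - 1` are `p` consecutive integers
  have := Int.eq_zero_of_abs_lt_dvd (zigzag_eq_zigzag_iff.mp h) <| abs_lt.mpr <| by
    unfold zigzagExp; constructor <;> split_ifs <;> omega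
  unfold zigzagExp at this; split_ifs at this <;> omega

theorem zigzag_ne_zigzag_succ {n : ℕ} (hn : n + 1 < MulAction.period (f * g) u) :
    zigzag f g u n ≠ zigzag f g u (n + 1) := fun h => by
  have := zigzag_injOn (by omega) hn h
  omega

theorem zigzag_period (hp : 0 < MulAction.period (f * g) u) :
    zigzag f g u (MulAction.period (f * g) u) =
      zigzag f g u (MulAction.period (f * g) u - 1) := by
  rw [zigzag_eq_zigzag_iff]
  generalize MulAction.period (f * g) u = p at hp ⊢
  have : zigzagExp p - zigzagExp (p - 1) = p ∨ zigzagExp p - zigzagExp (p - 1) = -p := by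
    unfold zigzagExp; split_ifs <;> omega
  rcases this with h | h <;> simp [h]

section Involutive

variable (hf : Function.Involutive f) (hg : Function.Involutive g)
include hf hg

theorem mul_inv_rev_of_involutive : (f * g)⁻¹ = g * f :=
  inv_eq_of_mul_eq_one_right <| by ext x; simp [hg (f x), hf x]

theorem apply_zpow_apply_eq_zpow_neg (hu : f u = u) (k : ℤ) :
    f (((f * g) ^ k) u) = ((f * g) ^ (-k)) u := by
  have hsemi : SemiconjBy f (f * g) (g * f) := by
    ext x; simp [hf (g x), hf x]
  rw [← mul_apply, (hsemi.zpow_right k).eq, mul_apply, hu, zpow_neg, ← inv_zpow,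
    mul_inv_rev_of_involutive hf hg]

theorem apply_zpow_apply_eq_zpow_neg_sub_one (hu : f u = u) (k : ℤ) :
    g (((f * g) ^ k) u) = ((f * g) ^ (-k - 1)) u := by
  have hsemi : SemiconjBy g (f * g) (g * f) := (mul_assoc g f g).symm
  rw [← mul_apply, (hsemi.zpow_right k).eq, mul_apply, ← hu, ← mul_apply g f, ← mul_apply,
    ← zpow_add_one, ← mul_inv_rev_of_involutive hf hg, inv_zpow', neg_add', hu]

theorem zigzag_succ_of_even (hu : f u = u) {n : ℕ} (hn : Even n) :
    zigzag f g u (n + 1) = g (zigzag f g u n) := by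
  rw [zigzag, zigzag, apply_zpow_apply_eq_zpow_neg_sub_one hf hg hu]
  congr 2; unfold zigzagExp; obtain ⟨k, rfl⟩ := hn; split_ifs <;> omega

theorem zigzag_succ_of_odd (hu : f u = u) {n : ℕ} (hn : Odd n) :
    zigzag f g u (n + 1) = f (zigzag f g u n) := by
  rw [zigzag, zigzag, apply_zpow_apply_eq_zpow_neg hf hg hu]
  congr 2; unfold zigzagExp; obtain ⟨k, rfl⟩ := hn; split_ifs <;> omega

theorem apply_zigzag_eq_zigzag_succ_iff (hu : f u = u) {n : ℕ}
    (hn : n + 1 < MulAction.period (f * g) u) :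
    f (zigzag f g u n) = zigzag f g u (n + 1) ↔ Odd n := by
  refine ⟨fun h => Nat.not_even_iff_odd.mp fun hn => ?_,
    fun h => (zigzag_succ_of_odd hf hg hu h).symm⟩
  rw [zigzag_succ_of_even hf hg hu hn, zigzag, apply_zpow_apply_eq_zpow_neg hf hg hu,
    apply_zpow_apply_eq_zpow_neg_sub_one hf hg hu, zpow_apply_eq_zpow_apply_iff] at h
  have h1 : (MulAction.period (f * g) u : ℤ) ∣ 1 := by simpa using h
  have := Int.eq_one_of_dvd_one (by positivity) h1
  omega

/-- `f` acts on the exponents of the orbit of `u` as `k ↦ -k`, whose fixed points modulo the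
period `p` are `0` and `p / 2`. -/
theorem eq_or_eq_zigzag_of_zigzag_eq (hu : f u = u) (hv : f v = v) {a b : ℕ}
    (h : zigzag f g v b = zigzag f g u a) :
    v = u ∨ v = zigzag f g u (MulAction.period (f * g) u - 1) := by
  obtain ⟨k, rfl⟩ : SameCycle (f * g) u v :=
    (sameCycle_zigzag a).trans (h ▸ (sameCycle_zigzag b).symm)
  rw [apply_zpow_apply_eq_zpow_neg hf hg hu, zpow_apply_eq_zpow_apply_iff] at hv
  obtain ⟨c, hc⟩ := hv
  rcases Int.even_or_odd' c with ⟨d, rfl | rfl⟩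
  · left
    rw [← Perm.smul_def, MulAction.zpow_smul_eq_iff_period_dvd]
    exact ⟨-d, by linarith⟩
  · refine Or.inr <| (zpow_apply_eq_zpow_apply_iff _ _ _ _).mpr ⟨-d, ?_⟩
    have hP : -k - k = 2 * (MulAction.period (f * g) u * d) + MulAction.period (f * g) u := by
      rw [hc]; ring
    rw [mul_neg]
    generalize (MulAction.period (f * g) u : ℤ) * d = P at hP ⊢
    unfold zigzagExp; split_ifs <;> omega

theorem apply_zigzag_period_pred_of_even [Finite α] (hu : f u = u)
    (hp : Even (MulAction.period (f * g) u)) :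
    f (zigzag f g u (MulAction.period (f * g) u - 1)) =
      zigzag f g u (MulAction.period (f * g) u - 1) := by
  have hpos := MulAction.period_pos_of_orderOf_pos (orderOf_pos (f * g)) u
  rw [← zigzag_succ_of_odd hf hg hu (by grind), Nat.sub_add_cancel hpos, zigzag_period hpos]

theorem apply_zigzag_period_pred_of_odd (hu : f u = u) (hp : Odd (MulAction.period (f * g) u)) :
    g (zigzag f g u (MulAction.period (f * g) u - 1)) =
      zigzag f g u (MulAction.period (f * g) u - 1) := by
  rw [← zigzag_succ_of_even hf hg hu (by grind), Nat.sub_add_cancel hp.pos, zigzag_period hp.pos]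

theorem apply_zigzag_period_pred_ne_of_odd (hu : f u = u) (hgu : g u ≠ u)
    (hp : Odd (MulAction.period (f * g) u)) :
    f (zigzag f g u (MulAction.period (f * g) u - 1)) ≠
      zigzag f g u (MulAction.period (f * g) u - 1) := by
  obtain ⟨k, hk⟩ := hp
  rcases k.eq_zero_or_pos with rfl | hk0
  · have := zigzag_period (f := f) (g := g) (u := u) (by omega)
    rw [hk, zigzag_succ_of_even hf hg hu (by decide)] at this
    simp_all
  · have hpred : MulAction.period (f * g) u - 1 = 2 * k - 1 + 1 := by omega
    have hstep := zigzag_succ_of_odd hf hg hu (n := 2 * k - 1) (by grind)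
    rw [hpred, hstep, hf]
    intro h
    have := zigzag_injOn (by omega) (by omega) (h.trans hstep.symm)
    omega

theorem injOn_zigzag_period_pred :
    Set.InjOn (fun u => zigzag f g u (MulAction.period (f * g) u - 1))
      {u | f u = u ∧ g u ≠ u ∧ Odd (MulAction.period (f * g) u)} := by
  rintro u ⟨hu, hgu, hp⟩ v ⟨hv, -⟩ h
  rcases eq_or_eq_zigzag_of_zigzag_eq hf hg hu hv h.symm with rfl | rfl
  · rfl
  · exact absurd hv (apply_zigzag_period_pred_ne_of_odd hf hg hu hgu hp)

theorem card_filter_zigzag_edge_le_two [DecidableEq α] {A : Finset α} {L : ℕ}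
    (hA : ∀ u ∈ A, f u = u ∧ 2 * L + 1 < MulAction.period (f * g) u) (e : Sym2 α) :
    (Finset.filter (fun q => s(zigzag f g q.1 (2 * q.2 + 1), zigzag f g q.1 (2 * q.2 + 2)) = e)
      (A ×ˢ Finset.range L)).card ≤ 2 := by
  set F := Finset.filter (fun q => s(zigzag f g q.1 (2 * q.2 + 1),
    zigzag f g q.1 (2 * q.2 + 2)) = e) (A ×ˢ Finset.range L)
  rcases F.eq_empty_or_nonempty with hF | ⟨⟨u, i⟩, hui⟩
  · simp [hF]
  have hmem : ∀ v j, (v, j) ∈ F → v ∈ A ∧ j < L ∧ s(zigzag f g v (2 * j + 1),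
      zigzag f g v (2 * j + 2)) = s(zigzag f g u (2 * i + 1), zigzag f g u (2 * i + 2)) := by
    intro v j hq
    simp only [F, Finset.mem_filter, Finset.mem_product, Finset.mem_range] at hq hui
    exact ⟨hq.1.1, hq.1.2, hq.2.trans hui.2.symm⟩
  have hu := (hA u (hmem u i hui).1).1
  calc F.card ≤ ({u, zigzag f g u (MulAction.period (f * g) u - 1)} : Finset α).card := by
        refine Finset.card_le_card_of_injOn Prod.fst (fun ⟨v, j⟩ hq => ?_) ?_
        · obtain ⟨hvA, -, he⟩ := hmem v j hq
          have hv := (hA v hvA).1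
          rcases Sym2.mem_iff.mp (he ▸ Sym2.mem_mk_left _ _) with h | h <;>
            simpa using eq_or_eq_zigzag_of_zigzag_eq hf hg hu hv h
        · rintro ⟨v, j⟩ hq ⟨v', j'⟩ hq' (rfl : v = v')
          obtain ⟨hvA, hj, he⟩ := hmem v j hq
          obtain ⟨-, hj', he'⟩ := hmem v j' hq'
          have := (hA v hvA).2
          have hjj : j = j' := by
            rcases Sym2.eq_iff.mp (he.trans he'.symm) with ⟨h, -⟩ | ⟨h, -⟩ <;>
              have := zigzag_injOn (by omega) (by omega) h <;> omega
          rw [hjj]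
    _ ≤ 2 := Finset.card_le_two

end Involutive

end Equiv.Perm

namespace SimpleGraph

variable {V : Type*} {G : SimpleGraph V}

def walkOfSeq (x : ℕ → V) : (n : ℕ) → (∀ i < n, G.Adj (x i) (x (i + 1))) → G.Walk (x 0) (x n)
  | 0, _ => .nil
  | n + 1, h => (walkOfSeq x n fun i hi => h i (by omega)).concat (h n (by omega))

variable (x : ℕ → V)

@[simp] theorem length_walkOfSeq (n : ℕ) (h : ∀ i < n, G.Adj (x i) (x (i + 1))) :
    (walkOfSeq x n h).length = n := by
  induction n with
  | zero => rfl
  | succ n ih => simp [walkOfSeq, ih]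

theorem support_walkOfSeq (n : ℕ) (h : ∀ i < n, G.Adj (x i) (x (i + 1))) :
    (walkOfSeq x n h).support = (List.range (n + 1)).map x := by
  induction n with
  | zero => rfl
  | succ n ih => simp [walkOfSeq, ih, List.range_succ (n := n + 1)]

theorem edges_walkOfSeq (n : ℕ) (h : ∀ i < n, G.Adj (x i) (x (i + 1))) :
    (walkOfSeq x n h).edges = (List.range n).map fun i => s(x i, x (i + 1)) := by
  induction n with
  | zero => rfl
  | succ n ih => simp [walkOfSeq, ih, List.range_succ (n := n)]

theorem isPath_walkOfSeq (n : ℕ) (h : ∀ i < n, G.Adj (x i) (x (i + 1)))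
    (hx : Set.InjOn x (Set.Iic n)) : (walkOfSeq x n h).IsPath := by
  rw [Walk.isPath_def, support_walkOfSeq]
  refine List.nodup_range.map_on fun i hi j hj hij => hx ?_ ?_ hij
  · simpa [Nat.lt_succ_iff] using hi
  · simpa [Nat.lt_succ_iff] using hj

end SimpleGraph

namespace SimpleGraph.Subgraph

open Equiv.Perm

variable {V : Type*} {G : SimpleGraph V} {M : G.Subgraph} {v w : V}

open Classical in
noncomputable def mateFun (M : G.Subgraph) (v : V) : V :=
  if h : ∃ w, M.Adj v w then h.choose else v

theorem IsMatching.mateFun_eq_of_adj (hM : M.IsMatching) (h : M.Adj v w) :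
    M.mateFun v = w := by
  have hex : ∃ w, M.Adj v w := ⟨w, h⟩
  rw [mateFun, dif_pos hex]
  exact hM.eq_of_adj_left hex.choose_spec h

theorem mateFun_eq_self (h : v ∉ M.support) : M.mateFun v = v :=
  dif_neg h

theorem IsMatching.involutive_mateFun (hM : M.IsMatching) : Function.Involutive M.mateFun := by
  intro v
  by_cases h : ∃ w, M.Adj v w
  · obtain ⟨w, hw⟩ := h
    rw [hM.mateFun_eq_of_adj hw, hM.mateFun_eq_of_adj hw.symm]
  · rw [mateFun_eq_self h, mateFun_eq_self h]

noncomputable def IsMatching.mate (hM : M.IsMatching) : Equiv.Perm V :=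
  hM.involutive_mateFun.toPerm

theorem IsMatching.involutive_mate (hM : M.IsMatching) : Function.Involutive hM.mate :=
  hM.involutive_mateFun

theorem IsMatching.adj_iff_mate_eq (hM : M.IsMatching) : M.Adj v w ↔ hM.mate v = w ∧ v ≠ w := by
  refine ⟨fun h => ⟨hM.mateFun_eq_of_adj h, h.ne⟩, fun ⟨h, hne⟩ => ?_⟩
  by_cases hv : ∃ w, M.Adj v w
  · obtain ⟨w', hw'⟩ := hv
    rwa [← h, IsMatching.mate, Function.Involutive.coe_toPerm, hM.mateFun_eq_of_adj hw']
  · exact absurd (h.symm.trans (mateFun_eq_self hv)) hne.symm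

theorem IsMatching.mate_eq_self_iff (hM : M.IsMatching) : hM.mate v = v ↔ v ∉ M.support :=
  ⟨fun h ⟨_, hw⟩ => ((hM.adj_iff_mate_eq.mp hw).1 ▸ hw).ne h.symm, mateFun_eq_self⟩

theorem IsMatching.ncard_support [Finite V] (hM : M.IsMatching) :
    M.support.ncard = 2 * M.edgeSet.ncard := by
  classical
  have := Fintype.ofFinite V
  have hdeg (v : V) : M.spanningCoe.degree v = if v ∈ M.support then 1 else 0 := by
    split_ifs with hv
    · obtain ⟨w, hw⟩ := hv
      exact SimpleGraph.degree_eq_one_iff_existsUnique_adj.mpr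
        ⟨w, hw, fun w' hw' => hM.eq_of_adj_left hw' hw⟩
    · exact (M.spanningCoe.degree_eq_zero_iff_notMem_support v).mpr hv
  rw [Set.ncard_eq_toFinset_card', ← Set.filter_mem_univ_eq_toFinset, Finset.card_filter,
    ← Finset.sum_congr rfl fun v _ => hdeg v, sum_degrees_eq_twice_card_edges, edgeFinset,
    ← Set.ncard_eq_toFinset_card', edgeSet_spanningCoe]

section TwoMatchings

variable {N : G.Subgraph} (hM : M.IsMatching) (hN : N.IsMatching) {u : V}

theorem IsMatching.adj_zigzag (hu : u ∉ M.support) {i : ℕ}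
    (hi : i + 1 < MulAction.period (hM.mate * hN.mate) u) :
    G.Adj (zigzag hM.mate hN.mate u i) (zigzag hM.mate hN.mate u (i + 1)) := by
  have hfu := hM.mate_eq_self_iff.mpr hu
  have hne := zigzag_ne_zigzag_succ hi
  rcases Nat.even_or_odd i with h | h
  · rw [zigzag_succ_of_even hM.involutive_mate hN.involutive_mate hfu h] at hne ⊢
    exact (hN.adj_iff_mate_eq.mpr ⟨rfl, hne⟩).adj_sub
  · rw [zigzag_succ_of_odd hM.involutive_mate hN.involutive_mate hfu h] at hne ⊢
    exact (hM.adj_iff_mate_eq.mpr ⟨rfl, hne⟩).adj_sub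

theorem IsMatching.mem_edgeSet_zigzag_iff (hu : u ∉ M.support) {i : ℕ}
    (hi : i + 1 < MulAction.period (hM.mate * hN.mate) u) :
    s(zigzag hM.mate hN.mate u i, zigzag hM.mate hN.mate u (i + 1)) ∈ M.edgeSet ↔ Odd i := by
  rw [Subgraph.mem_edgeSet, hM.adj_iff_mate_eq, ← apply_zigzag_eq_zigzag_succ_iff
    hM.involutive_mate hN.involutive_mate (hM.mate_eq_self_iff.mpr hu) hi]
  exact and_iff_left (zigzag_ne_zigzag_succ hi)

theorem IsMatching.exists_isAugPath_of_even_period [Finite V] (hu : u ∉ M.support)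
    (hp : Even (MulAction.period (hM.mate * hN.mate) u)) :
    ∃ (v : V) (P : G.Walk u v), M.IsAugPath P ∧
      P.length + 1 = MulAction.period (hM.mate * hN.mate) u := by
  have hpos := MulAction.period_pos_of_orderOf_pos (orderOf_pos (hM.mate * hN.mate)) u
  let P := walkOfSeq (zigzag hM.mate hN.mate u) (MulAction.period (hM.mate * hN.mate) u - 1)
    fun i hi => hM.adj_zigzag hN hu (by omega)
  refine ⟨_, P.copy zigzag_zero rfl, ⟨?_, hu, ?_, ?_, ?_⟩, ?_⟩
  · rw [Walk.isPath_copy]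
    exact isPath_walkOfSeq _ _ _ fun a ha b hb => zigzag_injOn (by grind) (by grind)
  · rw [← hM.mate_eq_self_iff]
    exact apply_zigzag_period_pred_of_even hM.involutive_mate hN.involutive_mate
      (hM.mate_eq_self_iff.mpr hu) hp
  · rw [Walk.length_copy, length_walkOfSeq]
    grind
  · rw [Walk.edges_copy, edges_walkOfSeq, List.Chain', List.isChain_map, List.isChain_range]
    intro i hi
    rw [hM.mem_edgeSet_zigzag_iff hN hu (by omega), hM.mem_edgeSet_zigzag_iff hN hu (by omega),
      Nat.odd_add_one]
    exact fun h => iff_not_self (Iff.of_eq h)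
  · rw [Walk.length_copy, length_walkOfSeq]
    omega

theorem IsMatching.two_mul_sub_le_ncard [Finite V] :
    2 * (N.edgeSet.ncard - M.edgeSet.ncard) ≤
      {u ∈ N.support \ M.support | Even (MulAction.period (hM.mate * hN.mate) u)}.ncard := by
  have hN' := Set.ncard_inter_add_ncard_sdiff_eq_ncard N.support M.support
  have hM' := Set.ncard_inter_add_ncard_sdiff_eq_ncard M.support N.support
  rw [hN.ncard_support] at hN'
  rw [Set.inter_comm, hM.ncard_support] at hM'
  have hA := Set.ncard_sdiff_add_ncard_of_subset <| Set.sep_subset (N.support \ M.support)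
    fun u => Even (MulAction.period (hM.mate * hN.mate) u)
  set A := {u ∈ N.support \ M.support | Even (MulAction.period (hM.mate * hN.mate) u)}
  have hodd : (N.support \ M.support) \ A ⊆ {u | hM.mate u = u ∧ hN.mate u ≠ u ∧
      Odd (MulAction.period (hM.mate * hN.mate) u)} :=
    fun u ⟨⟨huN, huM⟩, huA⟩ => ⟨hM.mate_eq_self_iff.mpr huM,
      mt hN.mate_eq_self_iff.mp (not_not.mpr huN),
      Nat.not_even_iff_odd.mp fun h => huA ⟨⟨huN, huM⟩, h⟩⟩
  have hT : ((N.support \ M.support) \ A).ncard ≤ (M.support \ N.support).ncard := by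
    refine Set.ncard_le_ncard_of_injOn _ (fun u hu => ?_)
      ((injOn_zigzag_period_pred hM.involutive_mate hN.involutive_mate).mono hodd)
    obtain ⟨hfu, hgu, hp⟩ := hodd hu
    have hend := apply_zigzag_period_pred_ne_of_odd hM.involutive_mate hN.involutive_mate
      hfu hgu hp
    rw [Ne, hM.mate_eq_self_iff, not_not] at hend
    exact ⟨hend, hN.mate_eq_self_iff.mp
      (apply_zigzag_period_pred_of_odd hM.involutive_mate hN.involutive_mate hfu hp)⟩
  omega

theorem IsMatching.ncard_mul_le [Finite V] {A : Set V} {L : ℕ}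
    (hA : ∀ u ∈ A, u ∉ M.support ∧ 2 * L + 1 < MulAction.period (hM.mate * hN.mate) u) :
    A.ncard * L ≤ 2 * M.edgeSet.ncard := by
  classical
  have := Fintype.ofFinite V
  have hmaps : ∀ q ∈ A.toFinset ×ˢ Finset.range L, s(zigzag hM.mate hN.mate q.1 (2 * q.2 + 1),
      zigzag hM.mate hN.mate q.1 (2 * q.2 + 2)) ∈ M.edgeSet.toFinset := by
    rintro ⟨u, i⟩ hq
    simp only [Finset.mem_product, Set.mem_toFinset, Finset.mem_range] at hq
    rw [Set.mem_toFinset]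
    exact (hM.mem_edgeSet_zigzag_iff hN (hA u hq.1).1 (by grind)).mpr (by simp)
  have := Finset.card_le_mul_card_image_of_maps_to hmaps 2 fun e _ =>
    card_filter_zigzag_edge_le_two hM.involutive_mate hN.involutive_mate
      (fun u hu => (hA u (Set.mem_toFinset.mp hu)).imp_left hM.mate_eq_self_iff.mpr) e
  rwa [Finset.card_product, Finset.card_range, ← Set.ncard_eq_toFinset_card',
    ← Set.ncard_eq_toFinset_card'] at this

end TwoMatchings

theorem IsMatching.ncard_sub_ncard_mul_le [Finite V] {N : G.Subgraph} (hM : M.IsMatching)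
    (hN : N.IsMatching) {L : ℕ}
    (hlong : ∀ (u v : V) (P : G.Walk u v), M.IsAugPath P → 2 * L < P.length) :
    (N.edgeSet.ncard - M.edgeSet.ncard) * L ≤ M.edgeSet.ncard := by
  refine Nat.le_of_mul_le_mul_left ?_ two_pos
  calc 2 * ((N.edgeSet.ncard - M.edgeSet.ncard) * L)
      = 2 * (N.edgeSet.ncard - M.edgeSet.ncard) * L := (Nat.mul_assoc ..).symm
    _ ≤ _ * L := Nat.mul_le_mul_right L (hM.two_mul_sub_le_ncard hN)
    _ ≤ 2 * M.edgeSet.ncard := hM.ncard_mul_le hN fun u ⟨⟨_, hu⟩, hp⟩ => by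
      obtain ⟨v, P, hP, hlen⟩ := hM.exists_isAugPath_of_even_period hN hu hp
      have := hlong u v P hP
      exact ⟨hu, by omega⟩

end SimpleGraph.Subgraph

theorem stmt_8_general {V : Type*} [Fintype V] (G : SimpleGraph V)
    (M : G.Subgraph) (hM : M.IsMatching) (κ L : ℕ) (hL : 0 < L)
    (hub : ∀ N : G.Subgraph, N.IsMatching → N.edgeSet.ncard ≤ κ)
    (hex : ∃ N : G.Subgraph, N.IsMatching ∧ N.edgeSet.ncard = κ)
    (hlong : ∀ (u v : V) (p : G.Walk u v), M.IsAugPath p → 2 * L < p.length) :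
    κ - κ / L ≤ M.edgeSet.ncard := by
  obtain ⟨N, hN, rfl⟩ := hex
  have hdeficit : N.edgeSet.ncard - M.edgeSet.ncard ≤ N.edgeSet.ncard / L :=
    (Nat.le_div_iff_mul_le hL).mpr ((hM.ncard_sub_ncard_mul_le hN hlong).trans (hub M hM))
  omega

/-- If every augmenting path with respect to the matching `M` has length greater than `2L`,
then `|M| ≥ κ - κ/L`, where `κ` is the maximum matching cardinality. -/
theorem stmt_8 {V : Type*} [Fintype V] (G : SimpleGraph V) (c : V → Bool)
    (hbip : ∀ u v, G.Adj u v → c u ≠ c v)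
    (M : G.Subgraph) (hM : M.IsMatching) (κ L : ℕ) (hL : 0 < L)
    (hub : ∀ N : G.Subgraph, N.IsMatching → N.edgeSet.ncard ≤ κ)
    (hex : ∃ N : G.Subgraph, N.IsMatching ∧ N.edgeSet.ncard = κ)
    (hlong : ∀ (u v : V) (p : G.Walk u v), M.IsAugPath p → 2 * L < p.length) :
    κ - κ / L ≤ M.edgeSet.ncard :=
  stmt_8_general G M hM κ L hL hub hex hlong
end

section
/- In a graph with a valid distance labeling ℓ (ℓ(u) ≤ ℓ(v)+1 along residual arcs) together with a 'gap' at value g (no node has label exactly g, but some node has label greater than g), no node of label greater than g has a residual path to any node of label less than g. -/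
/-! An arc lowers the label by at most one, so it cannot jump from above `g` to below `g`
without landing on `g`; since no node has label `g`, the set of nodes with label above `g`
is closed under arcs, hence under paths. -/

theorem lt_label_of_arc {V : Type*} {A : V → V → Prop} {ℓ : V → ℕ} {g : ℕ}
    (harc : ∀ u v, A u v → ℓ u ≤ ℓ v + 1) (hgap : ∀ v, ℓ v ≠ g) {u v : V}
    (huv : A u v) (hu : g < ℓ u) : g < ℓ v := by
  have := harc u v huv
  have := hgap v
  omega

theorem stmt_16_general {V : Type*} (A : V → V → Prop) (ℓ : V → ℕ) (g : ℕ)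
    (harc : ∀ u v, A u v → ℓ u ≤ ℓ v + 1)
    (hgap : ∀ v, ℓ v ≠ g) :
    ∀ u w, Relation.ReflTransGen A u w → g < ℓ u → g < ℓ w := by
  intro u w huw hu
  induction huw with
  | refl => exact hu
  | tail _ hvw ih => exact lt_label_of_arc harc hgap hvw ih

/-- Gap relabeling: if labels satisfy `ℓ u ≤ ℓ v + 1` along every residual arc, no node has
label exactly `g`, and some node has label above `g`, then no node of label above `g` has a
residual path to a node of label below `g`. -/
theorem stmt_16 {V : Type*} (A : V → V → Prop) (ℓ : V → ℕ) (g : ℕ)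
    (harc : ∀ u v, A u v → ℓ u ≤ ℓ v + 1)
    (hgap : ∀ v, ℓ v ≠ g) (habove : ∃ v, g < ℓ v) :
    ∀ u w, Relation.ReflTransGen A u w → g < ℓ u → g < ℓ w :=
  stmt_16_general A ℓ g harc hgap
end
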